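/- arXiv:2306.10991 — 6 statements merged into one kernel-verified Lean document; each statement's English description precedes it below -/
import Mathlib

section
/- Let $s$ be an arithmetic function (indexed from 1) with $s(1) \neq 0$, and let $f, g$ be sequences such that $g(k) = \sum_{r=0}^{k} s(k-r+1) f(r)$ for all $k \geq 0$. Then $f(k) = \sum_{r=0}^{k} \frac{(-1)^r}{s(1)^{r+1}} h(r)\, g(k-r)$, where $h(r) = \sum (-1)^{b_1} \prod_{i=1}^{r+1} s(i)^{b_i} \frac{(r-b_1)!}{b_2! \cdots b_{r+1}!}$, the sum running over all tuples of non-negative integers $(b_1,\dots,b_{r+1})$ with $\sum_{i=1}^{r+1} i\, b_i = 2r$ and $\sum_{i=1}^{r+1} b_i = r$. -/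
open Finset


/-- The combinatorial sum `h(r)` over integer partitions of `2r` into exactly `r` parts,
with `b i` the number of parts equal to `i`. -/
noncomputable def hFun (s : ℕ → ℂ) (r : ℕ) : ℂ :=
  ∑ b ∈ (Finset.Nat.antidiagonalTuple (r + 1) r).filter
      (fun b => ∑ i : Fin (r + 1), (i.1 + 1) * b i = 2 * r),
    (-1 : ℂ) ^ (b 0) * (∏ i : Fin (r + 1), (s (i.1 + 1)) ^ (b i)) *
      (Nat.factorial (r - b 0) : ℂ) /
      ∏ i ∈ Finset.univ.filter (fun i : Fin (r + 1) => 0 < i.1), (Nat.factorial (b i) : ℂ)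

/-!
With `S = ∑ₙ s (n + 1) Xⁿ`, the hypothesis says `G = S * F` for the generating series of `f` and
`g`, so `F = S⁻¹ * G` and it suffices to identify the coefficients of `S⁻¹`. Writing
`S = s 1 + V` with `X ∣ V`, the geometric series gives
`[Xʳ] S⁻¹ = s 1⁻¹ * ∑_{m ≤ r} (-s 1⁻¹)ᵐ [Xʳ] Vᵐ`, and the multinomial theorem expands `[Xʳ] Vᵐ`
as a sum over tuples `t` with `∑ tᵢ = m`, `∑ (i + 1) tᵢ = r`. Prepending `b 0 = r - m` parts equal
to `1` turns these tuples into exactly the partitions indexing `h(r)`.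
-/

open PowerSeries

theorem PowerSeries.coeff_sum_C_mul_X_pow_pow {R ι : Type*} [CommSemiring R] [DecidableEq ι]
    (I : Finset ι) (a : ι → R) (e : ι → ℕ) (m n : ℕ) :
    coeff n ((∑ i ∈ I, C (a i) * X ^ e i) ^ m) =
      ∑ k ∈ (piAntidiag I m).filter (fun k => ∑ i ∈ I, e i * k i = n),
        (Nat.multinomial I k : R) * ∏ i ∈ I, a i ^ k i := by
  simp_rw [sum_pow_eq_sum_piAntidiag, map_sum, mul_pow, ← map_pow, prod_mul_distrib, ← map_prod,
    ← pow_mul, prod_pow_eq_pow_sum, ← map_natCast C, ← mul_assoc, ← map_mul, coeff_C_mul_X_pow,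
    sum_filter]
  refine sum_congr rfl fun k _ => ?_
  simp_rw [mul_comm (e _)]
  exact if_congr eq_comm rfl rfl

theorem PowerSeries.coeff_inv_eq_of_X_pow_dvd {K : Type*} [Field K] {S V : K⟦X⟧} {c : K} {r : ℕ}
    (hc : c ≠ 0) (hV : X ∣ V) (hSV : X ^ (r + 1) ∣ S - (C c + V)) :
    coeff r S⁻¹ = c⁻¹ * ∑ m ∈ range (r + 1), (-c⁻¹) ^ m * coeff r (V ^ m) := by
  set x : K⟦X⟧ := C (-c⁻¹) * V
  set T : K⟦X⟧ := C c⁻¹ * ∑ m ∈ range (r + 1), x ^ m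
  have hS : constantCoeff S = c := by
    have := X_pow_dvd_iff.mp hSV 0 r.succ_pos
    rw [coeff_zero_eq_constantCoeff_apply, map_sub, map_add, constantCoeff_C,
      X_dvd_iff.mp hV, add_zero, sub_eq_zero] at this
    exact this
  have hCV : C c + V = C c * (1 - x) := by
    rw [mul_sub, mul_one, ← mul_assoc, ← map_mul, mul_neg, mul_inv_cancel₀ hc, map_neg, map_one,
      neg_one_mul, sub_neg_eq_add]
  have hT : (C c + V) * T = 1 - x ^ (r + 1) := by
    rw [hCV, mul_mul_mul_comm, ← map_mul, mul_inv_cancel₀ hc, map_one, one_mul, mul_neg_geom_sum]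
  have hST : X ^ (r + 1) ∣ S⁻¹ - T := by
    have : S⁻¹ - T = S⁻¹ * (x ^ (r + 1) - (S - (C c + V)) * T) := by
      rw [sub_mul, hT, mul_sub, mul_sub, ← mul_assoc, PowerSeries.inv_mul_cancel _ (hS ▸ hc)]
      ring
    rw [this]
    exact dvd_mul_of_dvd_right (dvd_sub (pow_dvd_pow_of_dvd (hV.mul_left _) _)
      (hSV.mul_right _)) _
  have hcoeff := X_pow_dvd_iff.mp hST r r.lt_succ_self
  rw [map_sub, sub_eq_zero] at hcoeff
  rw [hcoeff, coeff_C_mul, map_sum]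
  simp_rw [x, mul_pow, ← map_pow, coeff_C_mul]

theorem cons_mem_filter_antidiagonalTuple_iff {r : ℕ} (a : ℕ) (t : Fin r → ℕ) :
    (Fin.cons a t : Fin (r + 1) → ℕ) ∈ (Finset.Nat.antidiagonalTuple (r + 1) r).filter
        (fun b => ∑ i : Fin (r + 1), (i.1 + 1) * b i = 2 * r) ↔
      a + univ.sum t = r ∧ ∑ i : Fin r, (i.1 + 1) * t i = r := by
  have hweight : ∑ i : Fin r, (i.1 + 2) * t i = ∑ i : Fin r, (i.1 + 1) * t i + univ.sum t := by
    rw [← sum_add_distrib]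
    exact sum_congr rfl fun i _ => by ring
  simp only [mem_filter, Nat.mem_antidiagonalTuple, Fin.sum_univ_succ, Fin.cons_zero,
    Fin.cons_succ, Fin.val_zero, Fin.val_succ, zero_add, one_mul, add_assoc, one_add_one_eq_two,
    hweight]
  have heta : ∑ i, t i = univ.sum t := rfl
  omega

theorem hFun_summand_cons (s : ℕ → ℂ) {r : ℕ} (a : ℕ) (t : Fin r → ℕ) (h : a + univ.sum t = r) :
    (-1 : ℂ) ^ (Fin.cons a t : Fin (r + 1) → ℕ) 0 *
        (∏ i : Fin (r + 1), s (i.1 + 1) ^ (Fin.cons a t : Fin (r + 1) → ℕ) i) *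
        ((r - (Fin.cons a t : Fin (r + 1) → ℕ) 0).factorial : ℂ) /
        ∏ i ∈ univ.filter (fun i : Fin (r + 1) => 0 < i.1),
          (((Fin.cons a t : Fin (r + 1) → ℕ) i).factorial : ℂ) =
      (-s 1) ^ a * ((Nat.multinomial univ t : ℂ) * ∏ i : Fin r, s (i + 2) ^ t i) := by
  have hspec : (∏ i, ((t i).factorial : ℂ)) * Nat.multinomial univ t = (r - a).factorial := by
    rw [← Nat.cast_prod, ← Nat.cast_mul, Nat.multinomial_spec, show r - a = univ.sum t by omega]
  have hfac : ∏ i, ((t i).factorial : ℂ) ≠ 0 :=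
    prod_ne_zero_iff.mpr fun i _ => Nat.cast_ne_zero.mpr (Nat.factorial_ne_zero _)
  simp only [Fin.cons_zero, Fin.prod_univ_succ, prod_filter, Fin.cons_succ, Fin.val_zero,
    Fin.val_succ, lt_irrefl, if_false, Nat.succ_pos, if_true, one_mul, zero_add]
  rw [← hspec, neg_pow]
  field_simp
  ring

theorem hFun_eq_sum_multinomial (s : ℕ → ℂ) (r : ℕ) :
    hFun s r = ∑ m ∈ range (r + 1), (-s 1) ^ (r - m) *
      ∑ t ∈ (piAntidiag (univ : Finset (Fin r)) m).filter
          (fun t => ∑ i : Fin r, ((i : ℕ) + 1) * t i = r),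
        (Nat.multinomial univ t : ℂ) * ∏ i : Fin r, s (i + 2) ^ t i := by
  rw [hFun, ← sum_fiberwise_of_maps_to (g := fun b => r - b 0) (t := range (r + 1))
      (fun b _ => mem_range.mpr (by omega))]
  refine sum_congr rfl fun m hm => ?_
  have hmr : m ≤ r := Nat.lt_succ_iff.mp (mem_range.mp hm)
  rw [mul_sum]
  refine sum_nbij' (fun b => Fin.tail b) (fun t => Fin.cons (r - m) t) ?_ ?_ ?_ ?_ ?_
  · intro b hb
    induction b using Fin.consCases with | cons a t => ?_
    rw [mem_filter, cons_mem_filter_antidiagonalTuple_iff, Fin.cons_zero] at hb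
    rw [mem_filter, mem_piAntidiag, Fin.tail_cons]
    exact ⟨⟨by omega, by simp⟩, hb.1.2⟩
  · intro t ht
    rw [mem_filter, mem_piAntidiag] at ht
    rw [mem_filter, cons_mem_filter_antidiagonalTuple_iff, Fin.cons_zero]
    omega
  · intro b hb
    induction b using Fin.consCases with | cons a t => ?_
    rw [mem_filter, cons_mem_filter_antidiagonalTuple_iff, Fin.cons_zero] at hb
    rw [Fin.tail_cons, ← hb.2, Nat.sub_sub_self (by omega)]
  · intro t _
    exact Fin.tail_cons _ _
  · intro b hb
    induction b using Fin.consCases with | cons a t => ?_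
    rw [mem_filter, cons_mem_filter_antidiagonalTuple_iff, Fin.cons_zero] at hb
    rw [hFun_summand_cons s a t hb.1.1, Fin.tail_cons, ← hb.2, Nat.sub_sub_self (by omega)]

theorem neg_one_pow_div_pow_mul_neg_pow_sub {K : Type*} [Field K] {c : K} (hc : c ≠ 0) {m r : ℕ}
    (hmr : m ≤ r) : (-1) ^ r / c ^ (r + 1) * (-c) ^ (r - m) = c⁻¹ * (-c⁻¹) ^ m := by
  obtain ⟨j, rfl⟩ := Nat.exists_eq_add_of_le hmr
  rw [Nat.add_sub_cancel_left, neg_pow c, neg_pow c⁻¹, inv_pow, pow_add, pow_add]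
  field_simp
  rw [← pow_mul, pow_mul', neg_one_sq, one_pow, one_mul, pow_add, mul_comm]

theorem coeff_inv_mk_succ (s : ℕ → ℂ) (hs : s 1 ≠ 0) (r : ℕ) :
    coeff r (PowerSeries.mk fun n => s (n + 1))⁻¹ = (-1) ^ r / s 1 ^ (r + 1) * hFun s r := by
  set V : ℂ⟦X⟧ := ∑ i : Fin r, C (s (i + 2)) * X ^ ((i : ℕ) + 1)
  have hV : X ∣ V := dvd_sum fun i _ => (dvd_pow_self X i.val.succ_ne_zero).mul_left _
  have hSV : X ^ (r + 1) ∣ PowerSeries.mk (fun n => s (n + 1)) - (C (s 1) + V) := by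
    refine X_pow_dvd_iff.mpr fun n hn => ?_
    rw [map_sub, map_add, map_sum, coeff_mk, coeff_C, sub_eq_zero]
    simp_rw [coeff_C_mul_X_pow]
    rw [Fin.sum_univ_eq_sum_range (fun i => if n = i + 1 then s (i + 2) else 0)]
    rcases n with _ | j
    · simp
    · simp [show j < r by omega]
  rw [coeff_inv_eq_of_X_pow_dvd hs hV hSV, hFun_eq_sum_multinomial, mul_sum, mul_sum]
  refine sum_congr rfl fun m hm => ?_
  rw [coeff_sum_C_mul_X_pow_pow, ← mul_assoc, ← mul_assoc,
    neg_one_pow_div_pow_mul_neg_pow_sub hs (Nat.lt_succ_iff.mp (mem_range.mp hm)), mul_assoc]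

theorem inversion_formula (s f g : ℕ → ℂ) (hs : s 1 ≠ 0)
    (hg : ∀ k : ℕ, g k = ∑ r ∈ Finset.range (k + 1), s (k - r + 1) * f r) :
    ∀ k : ℕ, f k = ∑ r ∈ Finset.range (k + 1),
      ((-1 : ℂ) ^ r / (s 1) ^ (r + 1)) * hFun s r * g (k - r) := by
  set S : ℂ⟦X⟧ := PowerSeries.mk fun n => s (n + 1)
  have hG : PowerSeries.mk g = S * PowerSeries.mk f := by
    ext k
    rw [coeff_mk, hg, mul_comm, coeff_mul, Nat.sum_antidiagonal_eq_sum_range_succ_mk]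
    exact sum_congr rfl fun r _ => by simp only [S, coeff_mk, mul_comm]
  have hF : PowerSeries.mk f = S⁻¹ * PowerSeries.mk g := by
    rw [hG, ← mul_assoc, PowerSeries.inv_mul_cancel _ (by simpa [S] using hs), one_mul]
  intro k
  rw [← coeff_mk k f, hF, coeff_mul, Nat.sum_antidiagonal_eq_sum_range_succ_mk]
  exact sum_congr rfl fun r _ => by rw [coeff_inv_mk_succ s hs, coeff_mk]
end

section
/- Let $j \geq 1$ and let $c > 0$ be a real number (playing the role of $nx$). Define $S_3(z) = (-1)^{j+1} j! + \sum_{m=0}^{j} \binom{j}{m} (-1)^j m! \log^{j-m}(c)\, c^{1-z} (z-1)^{j-m}$. Then for every $1 \leq i \leq j$, the $i$-th derivative of $S_3$ at $z = 1$ vanishes, i.e., $S_3$ has a zero of order at least $j+1$ at $z=1$. -/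
open Finset

/-- The auxiliary entire function `S₃(z)` with `c` playing the role of `n x`. -/
noncomputable def S3 (j : ℕ) (c : ℝ) (z : ℂ) : ℂ :=
  (-1 : ℂ) ^ (j + 1) * (Nat.factorial j : ℂ) +
    ∑ m ∈ Finset.range (j + 1),
      (j.choose m : ℂ) * (-1 : ℂ) ^ j * (Nat.factorial m : ℂ) *
        (Real.log c : ℂ) ^ (j - m) * (c : ℂ) ^ (1 - z) * (z - 1) ^ (j - m)

/-!
With `w = log c · (z - 1)` one has `c^(1-z) = e^(-w)` and `binom j m · m! = j! / (j-m)!`, so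
`S₃ = (-1)^(j+1) j! (1 - e^(-w) E_j(w))`, where `E_j = expTrunc j` is the degree-`j` Taylor
polynomial of `exp`. Since `(e^(-w) E_j(w))' = -e^(-w) w^j / j!`, the derivative of `S₃` is `(z - 1)^j` times
an entire function, so the derivatives of `S₃` of orders `1, …, j` vanish at `z = 1`.
-/

open scoped Nat

lemma iteratedDeriv_eq_zero_of_eq_pow_sub_mul {𝕜 : Type*} [NontriviallyNormedField 𝕜]
    [CharZero 𝕜] [CompleteSpace 𝕜] {k n : ℕ} (hkn : k < n) {z₀ : 𝕜} {R R₁ : 𝕜 → 𝕜}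
    (hR₁ : ∀ z, AnalyticAt 𝕜 R₁ z) (hR : ∀ z, R z = (z - z₀) ^ n * R₁ z) :
    iteratedDeriv k R z₀ = 0 := by
  obtain ⟨t, rfl⟩ := Nat.exists_eq_add_of_lt hkn
  obtain ⟨R₂, -, hR₂⟩ := iteratedDeriv_mul_pow_sub_of_analytic (t := t + 1) hR₁ hR
  simp [hR₂]

noncomputable def expTrunc (n : ℕ) (w : ℂ) : ℂ :=
  ∑ k ∈ range (n + 1), w ^ k / k !

lemma expTrunc_succ (n : ℕ) (w : ℂ) :
    expTrunc (n + 1) w = expTrunc n w + w ^ (n + 1) / (n + 1)! := by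
  simp only [expTrunc, sum_range_succ _ (n + 1)]

lemma hasDerivAt_exp_neg_mul_expTrunc (n : ℕ) (w : ℂ) :
    HasDerivAt (fun w => Complex.exp (-w) * expTrunc n w)
      (-(Complex.exp (-w) * (w ^ n / n !))) w := by
  have hexp : HasDerivAt (fun w => Complex.exp (-w)) (-Complex.exp (-w)) w := by
    simpa using (hasDerivAt_neg w).cexp
  induction n with
  | zero => simpa [expTrunc] using hexp
  | succ n ih =>
    simp only [expTrunc_succ, mul_add]
    have hpow : HasDerivAt (fun w : ℂ => w ^ (n + 1) / (n + 1)!) (w ^ n / n !) w := by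
      refine ((hasDerivAt_pow (n + 1) w).div_const ((n + 1)! : ℂ)).congr_deriv ?_
      rw [Nat.factorial_succ, Nat.cast_mul]
      field_simp
      push_cast
      ring
    exact (ih.fun_add (hexp.fun_mul hpow)).congr_deriv (by ring)

lemma S3_eq_exp_neg_mul_expTrunc (j : ℕ) {c : ℝ} (hc : 0 < c) (z : ℂ) :
    S3 j c z = (-1) ^ (j + 1) * j ! *
      (1 - Complex.exp (-(Real.log c * (z - 1))) * expTrunc j (Real.log c * (z - 1))) := by
  set w : ℂ := Real.log c * (z - 1) with hw
  have hcpow : (c : ℂ) ^ (1 - z) = Complex.exp (-w) := by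
    rw [Complex.cpow_def_of_ne_zero (mod_cast hc.ne'), ← Complex.ofReal_log hc.le, hw]
    ring_nf
  have hsum : ∑ m ∈ range (j + 1), (j.choose m : ℂ) * (-1) ^ j * m ! *
        (Real.log c : ℂ) ^ (j - m) * (c : ℂ) ^ (1 - z) * (z - 1) ^ (j - m) =
      (-1) ^ j * j ! * Complex.exp (-w) * ∑ m ∈ range (j + 1), w ^ (j - m) / (j - m)! := by
    rw [mul_sum]
    refine sum_congr rfl fun m hm => ?_
    have hchoose : (j.choose m * m ! * (j - m)! : ℂ) = j ! := by
      exact_mod_cast Nat.choose_mul_factorial_mul_factorial (Nat.lt_succ_iff.mp (mem_range.mp hm))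
    have : ((j - m)! : ℂ) ≠ 0 := Nat.cast_ne_zero.mpr (Nat.factorial_ne_zero _)
    rw [hcpow, ← hchoose, mul_pow]
    field_simp
  have hreflect : ∑ m ∈ range (j + 1), w ^ (j - m) / (j - m)! = expTrunc j w := by
    rw [expTrunc, ← sum_range_reflect]
    refine sum_congr rfl fun k hk => ?_
    rw [Nat.add_sub_cancel, Nat.sub_sub_self (Nat.lt_succ_iff.mp (mem_range.mp hk))]
  rw [S3, hsum, hreflect]
  ring

lemma deriv_S3 (j : ℕ) {c : ℝ} (hc : 0 < c) (z : ℂ) :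
    deriv (S3 j c) z = (z - 1) ^ j *
      ((-1) ^ (j + 1) * Real.log c ^ (j + 1) * Complex.exp (-(Real.log c * (z - 1)))) := by
  have hw : HasDerivAt (fun z : ℂ => (Real.log c : ℂ) * (z - 1)) (Real.log c) z := by
    simpa using ((hasDerivAt_id z).sub_const 1).const_mul (Real.log c : ℂ)
  have h := (((hasDerivAt_exp_neg_mul_expTrunc j _).comp z hw).const_sub 1).const_mul
    ((-1) ^ (j + 1) * (j ! : ℂ))
  rw [funext (S3_eq_exp_neg_mul_expTrunc j hc)]
  refine h.deriv.trans ?_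
  rw [mul_pow]
  have : (j ! : ℂ) ≠ 0 := Nat.cast_ne_zero.mpr (Nat.factorial_ne_zero _)
  field_simp
  ring

theorem S3_iteratedDeriv_vanish_general (j : ℕ) (c : ℝ) (hc : 0 < c) :
    ∀ i : ℕ, 1 ≤ i → i ≤ j → iteratedDeriv i (S3 j c) 1 = 0 := by
  intro i hi hij
  obtain ⟨k, rfl⟩ := Nat.exists_eq_add_of_le' hi
  rw [iteratedDeriv_succ']
  exact iteratedDeriv_eq_zero_of_eq_pow_sub_mul (by omega) (fun _ => by fun_prop) (deriv_S3 j hc)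

theorem S3_iteratedDeriv_vanish (j : ℕ) (hj : 1 ≤ j) (c : ℝ) (hc : 0 < c) :
    ∀ i : ℕ, 1 ≤ i → i ≤ j → iteratedDeriv i (S3 j c) 1 = 0 :=
  S3_iteratedDeriv_vanish_general j c hc
end

section
/- Let $j \geq 1$ and $c > 0$. With $S_3(z) = (-1)^{j+1} j! + \sum_{m=0}^{j} \binom{j}{m} (-1)^j m! \log^{j-m}(c)\, c^{1-z} (z-1)^{j-m}$, one has $\lim_{z \to 1} \frac{S_3(z)}{(z-1)^{j+1}} = \frac{(-1)^{j+1} j! \log^{j+1}(c)}{(j+1)!}$. -/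
open Finset Filter

open Topology Complex Nat

/-! With `u = (z - 1) log c` and `T_j` the degree-`j` Taylor polynomial of `exp`, the binomial
sum in `S₃` collapses to `S₃(z) = (-1)^(j+1) j! e^{-u} (e^u - T_j(u))`. Since
`e^u - T_j(u) = u^(j+1)/(j+1)! + O(u^(j+2))` by the tail bound for the exponential series, dividing
by `(z - 1)^(j+1)` leaves `(-1)^(j+1) j! (log c)^(j+1)/(j+1)!` in the limit. -/

theorem sum_range_choose_mul_factorial_mul_pow {K : Type*} [Field K] [CharZero K] (j : ℕ) (x : K) :
    ∑ m ∈ range (j + 1), (j.choose m : K) * m ! * x ^ (j - m) =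
      j ! * ∑ k ∈ range (j + 1), x ^ k / k ! := by
  rw [mul_sum, ← sum_range_reflect]
  refine sum_congr rfl fun m hm => ?_
  have hmj : m ≤ j := Nat.lt_succ_iff.mp (mem_range.mp hm)
  have hfac : (j.choose m * m ! * (j - m) ! : K) = j ! := by
    exact_mod_cast choose_mul_factorial_mul_factorial hmj
  have hm0 : (m ! : K) ≠ 0 := by exact_mod_cast m.factorial_ne_zero
  rw [add_tsub_cancel_right, Nat.sub_sub_self hmj, choose_symm hmj, ← hfac]
  field_simp

theorem S3_eq_mul_exp_sub_sum_range (j : ℕ) {c : ℝ} (hc : 0 < c) (z : ℂ) :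
    S3 j c z = (-1) ^ (j + 1) * j ! * exp (-((z - 1) * Real.log c)) *
      (exp ((z - 1) * Real.log c) - ∑ k ∈ range (j + 1), ((z - 1) * Real.log c) ^ k / k !) := by
  set u := (z - 1) * Real.log c with hu
  have hcpow : (c : ℂ) ^ (1 - z) = exp (-u) := by
    rw [cpow_def_of_ne_zero (ofReal_ne_zero.mpr hc.ne'), ← ofReal_log hc.le, hu]
    congr 1
    ring
  have hsum : ∑ m ∈ range (j + 1), (j.choose m : ℂ) * (-1) ^ j * m ! *
      (Real.log c : ℂ) ^ (j - m) * (c : ℂ) ^ (1 - z) * (z - 1) ^ (j - m) =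
        (-1) ^ j * exp (-u) * ∑ m ∈ range (j + 1), (j.choose m : ℂ) * m ! * u ^ (j - m) := by
    rw [mul_sum]
    refine sum_congr rfl fun m _ => ?_
    rw [hcpow, mul_pow]
    ring
  rw [S3, hsum, sum_range_choose_mul_factorial_mul_pow, exp_neg]
  field_simp
  ring

theorem tendsto_exp_mul_sub_sum_range_succ_div_pow (n : ℕ) (L : ℂ) :
    Tendsto (fun w : ℂ => (exp (w * L) - ∑ k ∈ range (n + 1), (w * L) ^ k / k !) / w ^ n)
      (𝓝 0) (𝓝 0) := by
  set C : ℝ := ‖L‖ ^ (n + 1) * ((n + 2 : ℕ) * ((n + 1) ! * (n + 1 : ℕ) : ℝ)⁻¹)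
  have hsmall : ∀ᶠ w : ℂ in 𝓝 0, ‖w * L‖ ≤ 1 := by
    have : Tendsto (fun w : ℂ => w * L) (𝓝 0) (𝓝 0) := by
      simpa using (continuous_mul_const L).tendsto 0
    exact this.norm.eventually (ge_mem_nhds (by norm_num : ‖(0 : ℂ)‖ < 1))
  have hbound : ∀ᶠ w : ℂ in 𝓝 0,
      ‖(exp (w * L) - ∑ k ∈ range (n + 1), (w * L) ^ k / k !) / w ^ n‖ ≤ ‖w‖ * C := by
    filter_upwards [hsmall] with w hw
    rcases eq_or_ne w 0 with rfl | hw0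
    · simp [sum_range_succ']
    rw [norm_div, norm_pow, div_le_iff₀ (pow_pos (norm_pos_iff.mpr hw0) n)]
    refine (exp_bound hw n.succ_pos).trans (le_of_eq ?_)
    simp only [C, norm_mul, Nat.succ_eq_add_one]
    push_cast
    ring
  refine squeeze_zero_norm' hbound ?_
  simpa using (continuous_norm.tendsto (0 : ℂ)).mul_const C

theorem tendsto_exp_mul_sub_sum_range_div_pow (n : ℕ) (L : ℂ) :
    Tendsto (fun w : ℂ => (exp (w * L) - ∑ k ∈ range n, (w * L) ^ k / k !) / w ^ n)
      (𝓝[≠] 0) (𝓝 (L ^ n / n !)) := by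
  have hlim : Tendsto (fun w : ℂ => (exp (w * L) - ∑ k ∈ range (n + 1), (w * L) ^ k / k !) / w ^ n
      + L ^ n / n !) (𝓝[≠] 0) (𝓝 (L ^ n / n !)) := by
    simpa using ((tendsto_exp_mul_sub_sum_range_succ_div_pow n L).mono_left
      nhdsWithin_le_nhds).add_const (L ^ n / n !)
  refine hlim.congr' ?_
  filter_upwards [self_mem_nhdsWithin] with w (hw : w ≠ 0)
  rw [sum_range_succ]
  field_simp
  ring

theorem S3_limit_general (j : ℕ) (c : ℝ) (hc : 0 < c) :
    Tendsto (fun z : ℂ => S3 j c z / (z - 1) ^ (j + 1)) (nhdsWithin 1 {(1 : ℂ)}ᶜ)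
      (nhds ((-1 : ℂ) ^ (j + 1) * (Nat.factorial j : ℂ) * (Real.log c : ℂ) ^ (j + 1)
        / (Nat.factorial (j + 1) : ℂ))) := by
  have hshift : Tendsto (· - 1) (𝓝[≠] (1 : ℂ)) (𝓝[≠] 0) := by
    rw [Tendsto, map_subRight_nhdsNE, sub_self]
  have hexp : Tendsto (fun z : ℂ => exp (-((z - 1) * Real.log c))) (𝓝[≠] 1) (𝓝 1) := by
    have : Continuous fun z : ℂ => exp (-((z - 1) * Real.log c)) := by fun_prop
    simpa using (this.tendsto 1).mono_left nhdsWithin_le_nhds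
  have hlim := ((tendsto_const_nhds (x := (-1 : ℂ) ^ (j + 1) * j !)).mul hexp).mul
    ((tendsto_exp_mul_sub_sum_range_div_pow (j + 1) (Real.log c)).comp hshift)
  convert hlim using 2
  · rw [S3_eq_mul_exp_sub_sum_range j hc, mul_div_assoc, Function.comp_apply]
  · ring

theorem S3_limit (j : ℕ) (hj : 1 ≤ j) (c : ℝ) (hc : 0 < c) :
    Tendsto (fun z : ℂ => S3 j c z / (z - 1) ^ (j + 1)) (nhdsWithin 1 {(1 : ℂ)}ᶜ)
      (nhds ((-1 : ℂ) ^ (j + 1) * (Nat.factorial j : ℂ) * (Real.log c : ℂ) ^ (j + 1)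
        / (Nat.factorial (j + 1) : ℂ))) :=
  S3_limit_general j c hc
end

section
/- For positive integers $m, n, z$ with $z > 1$, and any $x$ in the cut plane $|\arg x| < \pi$, the Hurwitz zeta function satisfies $n^z \sum_{j=1}^{m} \zeta\left(z,\, nx + \frac{n(j-1)}{m}\right) = m^z \sum_{j=1}^{n} \zeta\left(z,\, mx + \frac{m(j-1)}{n}\right)$. -/
/-! Both sides equal `∑_{i < m} ∑_{j < n} ζ(z, x + i/m + j/n)`: this is the multiplication
formula `n^z ζ(z, n c) = ∑_{j < n} ζ(z, c + j/n)`, applied to every term on either side.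
The multiplication formula itself comes from splitting `∑_k (k + n c)^{-z}` by the residue
of `k` modulo `n`. -/

open Finset

/-- The Hurwitz zeta function `ζ(z, a) = ∑_{k ≥ 0} (k + a)^{-z}` at a positive integer
first argument `z`. -/
noncomputable def Hzeta (z : ℕ) (a : ℂ) : ℂ := ∑' k : ℕ, 1 / ((k : ℂ) + a) ^ z

lemma summable_one_div_natCast_add_pow {z : ℕ} (hz : 1 < z) (a : ℂ) :
    Summable fun k : ℕ => 1 / ((k : ℂ) + a) ^ z := by
  have hreal : Summable fun k : ℕ => 1 / |(k : ℝ) + a.re| ^ z := by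
    simpa only [Real.rpow_natCast] using
      (Real.summable_one_div_nat_add_rpow a.re z).2 (by exact_mod_cast hz)
  refine hreal.of_norm_bounded_eventually ?_
  rw [Nat.cofinite_eq_atTop]
  filter_upwards [Filter.eventually_gt_atTop ⌈-a.re⌉₊] with k hk
  have hpos : 0 < |(k : ℝ) + a.re| :=
    abs_pos.mpr (by linarith [Nat.lt_of_ceil_lt hk])
  have hle : |(k : ℝ) + a.re| ≤ ‖(k : ℂ) + a‖ := by
    simpa using Complex.abs_re_le_norm ((k : ℂ) + a)
  rw [norm_div, norm_one, norm_pow]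
  exact one_div_le_one_div_of_le (pow_pos hpos z) (pow_le_pow_left₀ hpos.le hle z)

lemma tsum_eq_sum_range_tsum_add_mul {R : Type*} [AddCommGroup R] [UniformSpace R]
    [IsUniformAddGroup R] [CompleteSpace R] [T0Space R] {f : ℕ → R} (hf : Summable f)
    (n : ℕ) [NeZero n] :
    ∑' k, f k = ∑ r ∈ range n, ∑' q, f (r + n * q) := by
  obtain ⟨n, rfl⟩ := Nat.exists_eq_succ_of_ne_zero (NeZero.ne n)
  rw [Nat.sumByResidueClasses hf (n + 1)]
  exact Fin.sum_univ_eq_sum_range (fun r => ∑' q, f (r + (n + 1) * q)) (n + 1)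

lemma natCast_pow_mul_Hzeta_mul {z : ℕ} (hz : 1 < z) (n : ℕ) (c : ℂ) :
    (n : ℂ) ^ z * Hzeta z (n * c) = ∑ j ∈ range n, Hzeta z (c + j / n) := by
  rcases eq_or_ne n 0 with rfl | hn
  · simp [zero_pow (by omega : z ≠ 0)]
  have : NeZero n := ⟨hn⟩
  have hn' : (n : ℂ) ≠ 0 := Nat.cast_ne_zero.mpr hn
  unfold Hzeta
  rw [← tsum_mul_left,
    tsum_eq_sum_range_tsum_add_mul ((summable_one_div_natCast_add_pow hz _).mul_left _) n]
  refine sum_congr rfl fun j _ => tsum_congr fun q => ?_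
  have hsplit : ((j + n * q : ℕ) : ℂ) + n * c = n * ((q : ℂ) + (c + j / n)) := by
    push_cast
    field_simp
    ring
  rw [hsplit, mul_pow, one_div, one_div, mul_inv, mul_inv_cancel_left₀ (pow_ne_zero z hn')]

lemma natCast_pow_mul_sum_Hzeta {z : ℕ} (hz : 1 < z) (a b : ℕ) (x : ℂ) :
    (a : ℂ) ^ z * ∑ j ∈ range b, Hzeta z (a * x + a * j / b)
      = ∑ j ∈ range b, ∑ i ∈ range a, Hzeta z (x + j / b + i / a) := by
  rw [mul_sum]
  refine sum_congr rfl fun j _ => ?_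
  rw [← natCast_pow_mul_Hzeta_mul hz, mul_add, mul_div_assoc]

theorem carlitz_hurwitz_general (m n z : ℕ) (hz : 1 < z) (x : ℂ) :
    (n : ℂ) ^ z * ∑ j ∈ Finset.range m, Hzeta z ((n : ℂ) * x + (n : ℂ) * (j : ℂ) / (m : ℂ))
      = (m : ℂ) ^ z * ∑ j ∈ Finset.range n, Hzeta z ((m : ℂ) * x + (m : ℂ) * (j : ℂ) / (n : ℂ)) := by
  rw [natCast_pow_mul_sum_Hzeta hz, natCast_pow_mul_sum_Hzeta hz, sum_comm]
  exact sum_congr rfl fun i _ => sum_congr rfl fun j _ => by rw [add_right_comm]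

theorem carlitz_hurwitz (m n z : ℕ) (hm : 0 < m) (hn : 0 < n) (hz : 1 < z) (x : ℂ)
    (hx : |x.arg| < Real.pi) :
    (n : ℂ) ^ z * ∑ j ∈ Finset.range m, Hzeta z ((n : ℂ) * x + (n : ℂ) * (j : ℂ) / (m : ℂ))
      = (m : ℂ) ^ z * ∑ j ∈ Finset.range n, Hzeta z ((m : ℂ) * x + (m : ℂ) * (j : ℂ) / (n : ℂ)) :=
  carlitz_hurwitz_general m n z hz x
end

section
/- For $x > 0$ one has $\left(1 - \tfrac{1}{2}\log 2\right)\psi'(2x) + \psi_1'(2x) = \tfrac{1}{4}\left\{\left(1 + \tfrac{1}{2}\log 2\right)\left(\psi'(x) + \psi'\left(x + \tfrac{1}{2}\right)\right) + \psi_1'(x) + \psi_1'\left(x + \tfrac{1}{2}\right)\right\}$. -/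
open Finset Filter

/-- The generalized digamma function `ψ_k(x) = -γ_k(x)`, minus the generalized
Stieltjes constant. -/
noncomputable def psiGen (k : ℕ) (x : ℝ) : ℝ :=
  - limUnder Filter.atTop (fun n : ℕ =>
      (∑ j ∈ Finset.range (n + 1), (Real.log (j + x)) ^ k / (j + x))
        - (Real.log (n + x)) ^ (k + 1) / (k + 1))

/-!
Write `φ_k(u) = log u ^ k / u`. For `x ≥ exp k` the partial sums
`∑_{j ≤ n} φ_k(j + x) - log (n + x) ^ (k + 1) / (k + 1)` decrease and are bounded below by
comparison with `∫ φ_k`, so they converge; the shift `x ↦ x + 1` (which also gives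
`ψ_k(x + 1) = ψ_k(x) + φ_k(x)`) extends this to all `x > 0`. Since `|φ_k'(u)| = O(u^(-3/2))`,
the derivatives of the partial sums converge uniformly on `(1, ∞)`, so `ψ_k` is differentiable
there, and by the shift on `(0, ∞)`.

Splitting the partial sums at `2x` by parity of the index and expanding `log (2u) ^ k` binomially
gives
`ψ_k(2x) = ∑_i C(k,i) (log 2)^(k-i) (ψ_i(x) + ψ_i(x + 1/2)) / 2 + (log 2)^(k+1) / (k+1)`,
the boundary terms `log (n + x) ^ m - log (n + x + 1/2) ^ m` tending to `0`. Differentiating this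
for `k = 0` and `k = 1` and combining the two identities gives the theorem.
-/

open Set Real
open scoped Topology

noncomputable def logPowDiv (k : ℕ) (u : ℝ) : ℝ := log u ^ k / u

noncomputable def logPowSuccDiv (k : ℕ) (u : ℝ) : ℝ := log u ^ (k + 1) / (k + 1)

noncomputable def psiSeq (k : ℕ) (x : ℝ) (n : ℕ) : ℝ :=
  ∑ j ∈ range (n + 1), logPowDiv k (j + x) - logPowSuccDiv k (n + x)

lemma psiGen_eq_neg_limUnder (k : ℕ) (x : ℝ) :
    psiGen k x = -limUnder atTop (psiSeq k x) := rfl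

section logPowDiv

variable (k : ℕ) {u v : ℝ}

lemma hasDerivAt_logPowSuccDiv (hu : 0 < u) :
    HasDerivAt (logPowSuccDiv k) (logPowDiv k u) u := by
  have h : HasDerivAt (logPowSuccDiv k) _ u :=
    ((hasDerivAt_log hu.ne').pow (k + 1)).div_const ((k : ℝ) + 1)
  refine h.congr_deriv ?_
  simp only [logPowDiv, Nat.add_sub_cancel, Nat.cast_add, Nat.cast_one]
  field_simp

lemma hasDerivAt_logPowDiv (hu : 0 < u) :
    HasDerivAt (logPowDiv k) ((k * log u ^ (k - 1) - log u ^ k) / u ^ 2) u := by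
  have h : HasDerivAt (logPowDiv k) _ u :=
    ((hasDerivAt_log hu.ne').pow k).div (hasDerivAt_id u) hu.ne'
  refine h.congr_deriv ?_
  simp only [Pi.pow_apply]
  field_simp

lemma logPowDiv_nonneg (hu : 1 ≤ u) : 0 ≤ logPowDiv k u :=
  div_nonneg (pow_nonneg (log_nonneg hu) k) (by linarith)

lemma antitoneOn_logPowDiv : AntitoneOn (logPowDiv k) (Ici (exp k)) := by
  have hpos : ∀ u ∈ Ici (exp k), 0 < u := fun u hu => (exp_pos _).trans_le hu
  refine antitoneOn_of_deriv_nonpos (convex_Ici _)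
    (fun u hu => (hasDerivAt_logPowDiv k (hpos u hu)).continuousAt.continuousWithinAt)
    (fun u hu => ?_) (fun u hu => ?_) <;> rw [interior_Ici] at hu
  · exact (hasDerivAt_logPowDiv k (hpos u (mem_Ici.mpr hu.le))).differentiableAt
      |>.differentiableWithinAt
  · have hu0 := hpos u (mem_Ici.mpr hu.le)
    rw [(hasDerivAt_logPowDiv k hu0).deriv]
    have hk : (k : ℝ) ≤ log u := (le_log_iff_exp_le hu0).mpr hu.le
    refine div_nonpos_of_nonpos_of_nonneg ?_ (sq_nonneg u)
    rcases Nat.eq_zero_or_pos k with rfl | hk0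
    · simp
    · have hlog : log u ^ k = log u * log u ^ (k - 1) := by rw [← pow_succ', Nat.sub_add_cancel hk0]
      rw [hlog, ← sub_mul]
      exact mul_nonpos_of_nonpos_of_nonneg (by linarith)
        (pow_nonneg ((Nat.cast_nonneg k).trans hk) _)

lemma tendsto_logPowDiv_atTop : Tendsto (logPowDiv k) atTop (𝓝 0) := by
  have h := tendsto_pow_log_div_mul_add_atTop 1 0 k one_ne_zero
  simp only [one_mul, add_zero] at h
  exact h

/-- `logPowDiv k` decreases on `[exp k, ∞)`, so its integral `logPowSuccDiv k v - logPowSuccDiv k u`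
lies between the endpoint rectangles. -/
lemma logPowDiv_mul_le_logPowSuccDiv_sub (hu : exp k ≤ u) (huv : u ≤ v) :
    logPowDiv k v * (v - u) ≤ logPowSuccDiv k v - logPowSuccDiv k u ∧
      logPowSuccDiv k v - logPowSuccDiv k u ≤ logPowDiv k u * (v - u) := by
  have hpos : ∀ t ∈ Icc u v, 0 < t := fun t ht => (exp_pos _).trans_le (hu.trans ht.1)
  have hcont : ContinuousOn (logPowSuccDiv k) (Icc u v) := fun t ht =>
    (hasDerivAt_logPowSuccDiv k (hpos t ht)).continuousAt.continuousWithinAt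
  have hderiv : ∀ t ∈ interior (Icc u v), HasDerivAt (logPowSuccDiv k) (logPowDiv k t) t :=
    fun t ht => hasDerivAt_logPowSuccDiv k (hpos t (interior_subset ht))
  have hdiff : DifferentiableOn ℝ (logPowSuccDiv k) (interior (Icc u v)) := fun t ht =>
    (hderiv t ht).differentiableAt.differentiableWithinAt
  have hanti : ∀ t ∈ interior (Icc u v), t ∈ Ici (exp k) := fun t ht =>
    hu.trans (interior_subset ht).1
  rw [interior_Icc] at hderiv hanti
  have hu' : u ∈ Icc u v := ⟨le_rfl, huv⟩
  have hv' : v ∈ Icc u v := ⟨huv, le_rfl⟩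
  constructor
  · refine (convex_Icc u v).mul_sub_le_image_sub_of_le_deriv hcont hdiff ?_ u hu' v hv' huv
    intro t ht
    rw [interior_Icc] at ht
    rw [(hderiv t ht).deriv]
    exact antitoneOn_logPowDiv k (hanti t ht) (hu.trans huv) ht.2.le
  · refine (convex_Icc u v).image_sub_le_mul_sub_of_deriv_le hcont hdiff ?_ u hu' v hv' huv
    intro t ht
    rw [interior_Icc] at ht
    rw [(hderiv t ht).deriv]
    exact antitoneOn_logPowDiv k hu (hanti t ht) ht.1.le

lemma tendsto_logPowSuccDiv_add_sub {y z : ℝ} (hyz : y ≤ z) :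
    Tendsto (fun n : ℕ => logPowSuccDiv k (n + z) - logPowSuccDiv k (n + y)) atTop (𝓝 0) := by
  have hshift := tendsto_atTop_add_const_right atTop y tendsto_natCast_atTop_atTop
  have hlim : Tendsto (fun n : ℕ => logPowDiv k (n + y) * (z - y)) atTop (𝓝 0) := by
    simpa using ((tendsto_logPowDiv_atTop k).comp hshift).mul_const (z - y)
  have hbounds : ∀ᶠ n : ℕ in atTop,
      0 ≤ logPowSuccDiv k (n + z) - logPowSuccDiv k (n + y) ∧
        logPowSuccDiv k (n + z) - logPowSuccDiv k (n + y) ≤ logPowDiv k (n + y) * (z - y) := by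
    filter_upwards [hshift.eventually_ge_atTop (exp k)] with n hn
    have h := logPowDiv_mul_le_logPowSuccDiv_sub k hn (by linarith : (n : ℝ) + y ≤ n + z)
    rw [show (n : ℝ) + z - (n + y) = z - y by ring] at h
    have hnonneg := logPowDiv_nonneg k (u := n + z)
      ((one_le_exp k.cast_nonneg).trans (hn.trans (by linarith)))
    exact ⟨(mul_nonneg hnonneg (sub_nonneg.mpr hyz)).trans h.1, h.2⟩
  exact squeeze_zero' (hbounds.mono fun _ h => h.1) (hbounds.mono fun _ h => h.2) hlim

end logPowDiv

section psiSeq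

variable (k : ℕ) {x : ℝ}

lemma psiSeq_succ_eq_add_psiSeq_add_one (x : ℝ) (n : ℕ) :
    psiSeq k x (n + 1) = logPowDiv k x + psiSeq k (x + 1) n := by
  simp only [psiSeq, sum_range_succ' _ (n + 1)]
  simp only [Nat.cast_add, Nat.cast_one, Nat.cast_zero, zero_add, add_right_comm _ (1 : ℝ),
    add_assoc]
  ring

lemma psiSeq_succ (x : ℝ) (n : ℕ) :
    psiSeq k x (n + 1) = psiSeq k x n + (logPowDiv k (n + 1 + x)
      - (logPowSuccDiv k (n + 1 + x) - logPowSuccDiv k (n + x))) := by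
  simp only [psiSeq, sum_range_succ]
  push_cast
  ring

lemma antitone_psiSeq (hx : exp k ≤ x) : Antitone (psiSeq k x) := by
  refine antitone_nat_of_succ_le fun n => ?_
  have h := (logPowDiv_mul_le_logPowSuccDiv_sub k (by linarith [n.cast_nonneg (α := ℝ)])
    (by linarith : (n : ℝ) + x ≤ n + 1 + x)).1
  rw [psiSeq_succ]
  linarith

lemma logPowDiv_add_le_psiSeq_add (hx : exp k ≤ x) (n : ℕ) :
    logPowDiv k (n + x) ≤ psiSeq k x n + logPowSuccDiv k x := by
  induction n with
  | zero => simp [psiSeq]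
  | succ n ih =>
    have h := (logPowDiv_mul_le_logPowSuccDiv_sub k (by linarith [n.cast_nonneg (α := ℝ)])
      (by linarith : (n : ℝ) + x ≤ n + 1 + x)).2
    rw [psiSeq_succ]
    push_cast
    linarith

lemma exists_tendsto_psiSeq (hx : 0 < x) : ∃ L, Tendsto (psiSeq k x) atTop (𝓝 L) := by
  obtain ⟨N, hN⟩ := exists_nat_ge (exp k)
  replace hN : exp k ≤ x + N := by linarith
  induction N generalizing x with
  | zero =>
    rw [Nat.cast_zero, add_zero] at hN
    refine ⟨_, tendsto_atTop_ciInf (antitone_psiSeq k hN) ⟨-logPowSuccDiv k x, ?_⟩⟩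
    rintro _ ⟨n, rfl⟩
    have h1 := logPowDiv_add_le_psiSeq_add k hN n
    have h2 := logPowDiv_nonneg k
      ((one_le_exp k.cast_nonneg).trans (hN.trans (le_add_of_nonneg_left n.cast_nonneg)))
    linarith
  | succ N ih =>
    obtain ⟨L, hL⟩ := ih (x := x + 1) (by linarith) (by push_cast at hN; linarith)
    refine ⟨logPowDiv k x + L, (tendsto_add_atTop_iff_nat 1).mp ?_⟩
    simpa only [psiSeq_succ_eq_add_psiSeq_add_one] using hL.const_add _

lemma tendsto_psiSeq (hx : 0 < x) : Tendsto (psiSeq k x) atTop (𝓝 (-psiGen k x)) := by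
  obtain ⟨L, hL⟩ := exists_tendsto_psiSeq k hx
  rwa [psiGen_eq_neg_limUnder, hL.limUnder_eq, neg_neg]

lemma psiGen_add_one (hx : 0 < x) : psiGen k (x + 1) = psiGen k x + logPowDiv k x := by
  have h := (tendsto_psiSeq k (x := x + 1) (by linarith)).const_add (logPowDiv k x)
  simp only [← psiSeq_succ_eq_add_psiSeq_add_one] at h
  have := tendsto_nhds_unique ((tendsto_add_atTop_iff_nat 1).mpr (tendsto_psiSeq k hx)) h
  linarith

end psiSeq

lemma log_pow_le_mul_rpow (m : ℕ) {u : ℝ} (hu : 1 ≤ u) :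
    log u ^ m ≤ (2 * m) ^ m * u ^ (1 / 2 : ℝ) := by
  rcases Nat.eq_zero_or_pos m with rfl | hm
  · simpa using one_le_rpow hu (by norm_num)
  have hm' : (0 : ℝ) < m := Nat.cast_pos.mpr hm
  have hlog : log u ≤ 2 * m * u ^ (1 / (2 * m) : ℝ) := by
    have := log_le_rpow_div (by linarith) (show (0 : ℝ) < 1 / (2 * m) by positivity)
    rwa [div_div_eq_mul_div, div_one, mul_comm] at this
  calc log u ^ m ≤ (2 * m * u ^ (1 / (2 * m) : ℝ)) ^ m :=
        pow_le_pow_left₀ (log_nonneg hu) hlog m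
    _ = (2 * m) ^ m * u ^ (1 / 2 : ℝ) := by
        rw [mul_pow, ← rpow_mul_natCast (by linarith)]
        congr 2
        field_simp

lemma exists_abs_deriv_logPowDiv_le (k : ℕ) : ∃ C, 0 ≤ C ∧ ∀ u : ℝ, 1 ≤ u →
    |(k * log u ^ (k - 1) - log u ^ k) / u ^ 2| ≤ C * u ^ (-(3 / 2) : ℝ) := by
  refine ⟨k * (2 * (k - 1 : ℕ)) ^ (k - 1) + (2 * k) ^ k, by positivity, fun u hu => ?_⟩
  have hu0 : 0 < u := by linarith
  have hL : 0 ≤ log u := log_nonneg hu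
  have hnum : |k * log u ^ (k - 1) - log u ^ k|
      ≤ (k * (2 * (k - 1 : ℕ)) ^ (k - 1) + (2 * k) ^ k) * u ^ (1 / 2 : ℝ) := by
    refine (abs_sub _ _).trans ?_
    rw [abs_of_nonneg (by positivity), abs_of_nonneg (by positivity), add_mul, mul_assoc]
    gcongr
    · exact log_pow_le_mul_rpow _ hu
    · exact log_pow_le_mul_rpow _ hu
  have hpow : u ^ (-(3 / 2) : ℝ) = u ^ (1 / 2 : ℝ) / u ^ 2 := by
    rw [← rpow_natCast, ← rpow_sub hu0]
    norm_num
  rw [abs_div, abs_of_pos (by positivity : 0 < u ^ 2), hpow, mul_div_assoc']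
  gcongr

section differentiable

variable (k : ℕ) {y : ℝ}

lemma hasDerivAt_neg_psiSeq (n : ℕ) (hy : 0 < y) :
    HasDerivAt (fun t => -psiSeq k t n)
      (-(∑ j ∈ range (n + 1), (k * log (j + y) ^ (k - 1) - log (j + y) ^ k) / (j + y) ^ 2
        - logPowDiv k (n + y))) y := by
  refine (HasDerivAt.sub (HasDerivAt.fun_sum fun j _ => .comp_const_add _ y ?_)
    (.comp_const_add _ y ?_)).neg
  · exact hasDerivAt_logPowDiv k (by positivity)
  · exact hasDerivAt_logPowSuccDiv k (by positivity)

lemma tendstoUniformlyOn_logPowDiv_add :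
    TendstoUniformlyOn (fun (n : ℕ) t => logPowDiv k (n + t)) 0 atTop (Ioi 1) := by
  rw [Metric.tendstoUniformlyOn_iff]
  intro ε hε
  have hlim := (tendsto_logPowDiv_atTop k).comp
    (tendsto_atTop_add_const_right atTop 1 tendsto_natCast_atTop_atTop)
  filter_upwards [hlim.eventually_lt_const hε, (tendsto_atTop_add_const_right atTop 1
    tendsto_natCast_atTop_atTop).eventually_ge_atTop (exp k)] with n hn hexp t ht
  have hle := antitoneOn_logPowDiv k hexp (hexp.trans (by linarith [mem_Ioi.mp ht]))
    (by linarith [mem_Ioi.mp ht] : (n : ℝ) + 1 ≤ n + t)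
  have hnonneg := logPowDiv_nonneg k (by linarith [mem_Ioi.mp ht, n.cast_nonneg (α := ℝ)] :
    1 ≤ (n : ℝ) + t)
  rw [Pi.zero_apply, dist_zero_left, Real.norm_eq_abs, abs_of_nonneg hnonneg]
  exact hle.trans_lt hn

lemma differentiableAt_psiGen_of_one_lt (hy : 1 < y) : DifferentiableAt ℝ (psiGen k) y := by
  set D : ℕ → ℝ → ℝ := fun j t => (k * log (j + t) ^ (k - 1) - log (j + t) ^ k) / (j + t) ^ 2
  obtain ⟨C, hC0, hC⟩ := exists_abs_deriv_logPowDiv_le k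
  have hsum : Summable fun j : ℕ => C * ((j : ℝ) + 1) ^ (-(3 / 2) : ℝ) := by
    refine Summable.mul_left C ?_
    simpa using (summable_nat_add_iff 1).mpr
      (Real.summable_nat_rpow.mpr (by norm_num : -(3 / 2 : ℝ) < -1))
  have hD : TendstoUniformlyOn (fun n t => ∑ j ∈ range n, D j t) (fun t => ∑' j, D j t)
      atTop (Ioi 1) := by
    refine tendstoUniformlyOn_tsum_nat hsum fun j t ht => ?_
    have ht : (1 : ℝ) < t := ht
    refine (hC _ (by linarith [j.cast_nonneg (α := ℝ)])).trans ?_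
    exact mul_le_mul_of_nonneg_left
      (rpow_le_rpow_of_nonpos (by positivity) (by linarith) (by norm_num)) hC0
  have hD' : TendstoUniformlyOn (fun n t => -(∑ j ∈ range (n + 1), D j t - logPowDiv k (n + t)))
      (fun t => -(∑' j, D j t - 0)) atTop (Ioi 1) :=
    ((show TendstoUniformlyOn (fun n t => ∑ j ∈ range (n + 1), D j t) _ atTop _ from
      fun u hu => (tendsto_add_atTop_nat 1).eventually (hD u hu)).sub
      (tendstoUniformlyOn_logPowDiv_add k)).neg
  refine (hasDerivAt_of_tendstoUniformlyOn isOpen_Ioi hD'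
    (Eventually.of_forall fun n t ht => hasDerivAt_neg_psiSeq k n (by linarith [mem_Ioi.mp ht]))
    (fun t ht => ?_) hy).differentiableAt
  simpa using (tendsto_psiSeq k (by linarith [mem_Ioi.mp ht] : (0 : ℝ) < t)).neg

lemma differentiableAt_psiGen (hy : 0 < y) : DifferentiableAt ℝ (psiGen k) y := by
  have heq : (fun t => psiGen k (t + 1) - logPowDiv k t) =ᶠ[𝓝 y] psiGen k := by
    filter_upwards [Ioi_mem_nhds hy] with t ht
    rw [psiGen_add_one k ht, add_sub_cancel_right]
  refine DifferentiableAt.congr_of_eventuallyEq ?_ heq.symm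
  have hshift : DifferentiableAt ℝ (fun t => psiGen k (t + 1)) y :=
    differentiableAt_comp_add_const.mpr (differentiableAt_psiGen_of_one_lt k (by linarith))
  exact hshift.sub (hasDerivAt_logPowDiv k hy).differentiableAt

end differentiable

lemma sum_range_two_mul {M : Type*} [AddCommMonoid M] (f : ℕ → M) (n : ℕ) :
    ∑ j ∈ range (2 * n), f j = ∑ m ∈ range n, (f (2 * m) + f (2 * m + 1)) := by
  induction n with
  | zero => simp
  | succ n ih =>
    rw [mul_add, mul_one, sum_range_succ, sum_range_succ, sum_range_succ, ih, add_assoc]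

section duplication

variable (k : ℕ) {u x : ℝ}

lemma logPowDiv_two_mul (hu : 0 < u) :
    logPowDiv k (2 * u) =
      ∑ i ∈ range (k + 1), k.choose i * log 2 ^ (k - i) * (logPowDiv i u / 2) := by
  rw [logPowDiv, log_mul two_ne_zero hu.ne', add_comm, add_pow, sum_div]
  refine sum_congr rfl fun i _ => ?_
  simp only [logPowDiv]
  field_simp

lemma logPowSuccDiv_two_mul (hu : 0 < u) :
    logPowSuccDiv k (2 * u) = ∑ i ∈ range (k + 1), k.choose i * log 2 ^ (k - i) * logPowSuccDiv i u
      + log 2 ^ (k + 1) / (k + 1) := by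
  rw [logPowSuccDiv, log_mul two_ne_zero hu.ne', add_comm, add_pow, sum_range_succ', add_div,
    sum_div]
  congr 1
  · refine sum_congr rfl fun i _ => ?_
    have hchoose : ((k + 1 : ℕ) : ℝ) * k.choose i = (k + 1).choose (i + 1) * (i + 1 : ℕ) := by
      exact_mod_cast Nat.add_one_mul_choose_eq k i
    simp only [logPowSuccDiv, Nat.add_sub_add_right]
    push_cast at hchoose
    field_simp
    linear_combination -log u ^ (i + 1) * hchoose
  · simp

lemma psiSeq_two_mul (hx : 0 < x) (n : ℕ) :
    psiSeq k (2 * x) (2 * n + 1) = ∑ i ∈ range (k + 1), k.choose i * log 2 ^ (k - i) *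
      ((psiSeq i x n + psiSeq i (x + 1 / 2) n
        + (logPowSuccDiv i (n + x) - logPowSuccDiv i (n + (x + 1 / 2)))) / 2)
      - log 2 ^ (k + 1) / (k + 1) := by
  have heven : ∀ m : ℕ, ((2 * m : ℕ) : ℝ) + 2 * x = 2 * (m + x) := fun m => by push_cast; ring
  have hodd : ∀ m : ℕ, ((2 * m + 1 : ℕ) : ℝ) + 2 * x = 2 * (m + (x + 1 / 2)) := fun m => by
    push_cast; ring
  have hpos : ∀ m : ℕ, (0 : ℝ) < m + x := fun m => by positivity
  have hpos' : ∀ m : ℕ, (0 : ℝ) < m + (x + 1 / 2) := fun m => by positivity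
  rw [psiSeq, show 2 * n + 1 + 1 = 2 * (n + 1) by ring, sum_range_two_mul]
  simp only [heven, hodd, fun m => logPowDiv_two_mul k (hpos m),
    fun m => logPowDiv_two_mul k (hpos' m), logPowSuccDiv_two_mul k (hpos' n)]
  simp only [← sum_add_distrib]
  rw [sum_comm, ← sub_sub, ← sum_sub_distrib]
  congr 1
  refine sum_congr rfl fun i _ => ?_
  simp only [psiSeq, ← mul_add, ← mul_sum, sum_add_distrib, ← sum_div]
  ring

lemma psiGen_two_mul (hx : 0 < x) :
    psiGen k (2 * x) = ∑ i ∈ range (k + 1), k.choose i * log 2 ^ (k - i) *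
      ((psiGen i x + psiGen i (x + 1 / 2)) / 2) + log 2 ^ (k + 1) / (k + 1) := by
  set c : ℕ → ℝ := fun i => k.choose i * log 2 ^ (k - i)
  have hx' : 0 < x + 1 / 2 := by linarith
  have hodd : Tendsto (fun n : ℕ => 2 * n + 1) atTop atTop :=
    StrictMono.tendsto_atTop fun a b h => by omega
  have hterm : ∀ i, Tendsto (fun n : ℕ => c i * ((psiSeq i x n + psiSeq i (x + 1 / 2) n
      + (logPowSuccDiv i (n + x) - logPowSuccDiv i (n + (x + 1 / 2)))) / 2)) atTop
      (𝓝 (-(c i * ((psiGen i x + psiGen i (x + 1 / 2)) / 2)))) := fun i => by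
    have h := ((((tendsto_psiSeq i hx).add (tendsto_psiSeq i hx')).sub
      (tendsto_logPowSuccDiv_add_sub i (by linarith : x ≤ x + 1 / 2))).div_const 2).const_mul (c i)
    convert h using 2 <;> ring
  have hrhs := (tendsto_finsetSum (range (k + 1)) fun i _ => hterm i).sub_const
    (log 2 ^ (k + 1) / (k + 1))
  have hlim := tendsto_nhds_unique ((tendsto_psiSeq k (by positivity : 0 < 2 * x)).comp hodd)
    (hrhs.congr fun n => (psiSeq_two_mul k hx n).symm)
  rw [sum_neg_distrib] at hlim
  linarith

lemma deriv_psiGen_two_mul (hx : 0 < x) :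
    2 * deriv (psiGen k) (2 * x) = ∑ i ∈ range (k + 1), k.choose i * log 2 ^ (k - i) *
      ((deriv (psiGen i) x + deriv (psiGen i) (x + 1 / 2)) / 2) := by
  have heq : (fun t => psiGen k (2 * t)) =ᶠ[𝓝 x] fun t => ∑ i ∈ range (k + 1),
      k.choose i * log 2 ^ (k - i) * ((psiGen i t + psiGen i (t + 1 / 2)) / 2)
        + log 2 ^ (k + 1) / (k + 1) := by
    filter_upwards [Ioi_mem_nhds hx] with t ht
    exact psiGen_two_mul k ht
  have hderiv : HasDerivAt (fun t => ∑ i ∈ range (k + 1),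
      k.choose i * log 2 ^ (k - i) * ((psiGen i t + psiGen i (t + 1 / 2)) / 2)
        + log 2 ^ (k + 1) / (k + 1)) (∑ i ∈ range (k + 1), k.choose i * log 2 ^ (k - i) *
          ((deriv (psiGen i) x + deriv (psiGen i) (x + 1 / 2)) / 2)) x := by
    refine (HasDerivAt.fun_sum fun i _ => ?_).add_const _
    refine (((differentiableAt_psiGen i hx).hasDerivAt.add
      (HasDerivAt.comp_add_const x _ ?_)).div_const 2).const_mul _
    exact (differentiableAt_psiGen i (by linarith)).hasDerivAt
  rw [← hderiv.deriv, ← heq.deriv_eq, deriv_comp_mul_left, smul_eq_mul]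

end duplication

theorem psi_one_duplication (x : ℝ) (hx : 0 < x) :
    (1 - Real.log 2 / 2) * deriv (psiGen 0) (2 * x) + deriv (psiGen 1) (2 * x)
      = (1 / 4) * ((1 + Real.log 2 / 2) * (deriv (psiGen 0) x + deriv (psiGen 0) (x + 1 / 2))
          + (deriv (psiGen 1) x + deriv (psiGen 1) (x + 1 / 2))) := by
  have h0 := deriv_psiGen_two_mul 0 hx
  have h1 := deriv_psiGen_two_mul 1 hx
  simp only [sum_range_succ, sum_range_zero] at h0 h1
  norm_num at h0 h1
  linear_combination (1 / 2 - log 2 / 4) * h0 + (1 / 2) * h1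
end

section
/- For positive integers $m, n$ and a non-negative integer $k$, define $f_{11}(m,n,k) = \sum_{\ell=0}^{k}\sum_{r=0}^{\ell} \frac{2^\ell (-1)^{k-\ell} \log^{k-\ell}(m/n)}{(k-\ell)!\,(\ell-r+1)!} \log^{\ell-r+1}(mN)$ for a parameter $N > 0$. Then the difference $f_{11}(m,n,k) - f_{11}(n,m,k)$ is independent of $N$ and equals $-\sum_{r=0}^{k} \frac{2^{k-r-1}}{(r+1)!}\left[\log^{r+1}\left(\frac{n}{m}\right) - \log^{r+1}\left(\frac{m}{n}\right)\right]$. -/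
/-!
With `L = log (m / n)` and `A = log (m N)`, the coefficient `2 ^ ℓ (-L) ^ (k - ℓ)` equals
`2 ^ k (-L / 2) ^ (k - ℓ)`, so `f₁₁(m, n, k)` is `2 ^ k` times a truncated Cauchy product of the
exponential series at `-L / 2` and `A`. The binomial theorem collapses it to
`2 ^ k (E (A - L / 2) - E (-L / 2))`, where `E` is the exponential series truncated at degree
`k + 1`. The point `A - L / 2 = log (N √(m n))` is symmetric in `m` and `n`, so all dependence on
`N` cancels in the difference, which is `2 ^ k (E (L / 2) - E (-L / 2))`.
-/

open Finset

/-- The quantity `f₁₁(m, n, k)` (depending on the parameter `N`). -/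
noncomputable def f11 (m n : ℝ) (k : ℕ) (N : ℝ) : ℝ :=
  ∑ ℓ ∈ Finset.range (k + 1), ∑ r ∈ Finset.range (ℓ + 1),
    2 ^ ℓ * (-1 : ℝ) ^ (k - ℓ) * (Real.log (m / n)) ^ (k - ℓ)
      / ((Nat.factorial (k - ℓ) : ℝ) * (Nat.factorial (ℓ - r + 1) : ℝ))
      * (Real.log (m * N)) ^ (ℓ - r + 1)

open scoped Nat

section TruncExp

variable {K : Type*} [Field K]

def truncExp (n : ℕ) (x : K) : K := ∑ d ∈ range (n + 1), x ^ d / d !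

theorem add_pow_div_factorial [CharZero K] (x y : K) (s : ℕ) :
    (x + y) ^ s / s ! = ∑ t ∈ range (s + 1), x ^ t / t ! * (y ^ (s - t) / (s - t)!) := by
  rw [add_pow, sum_div]
  refine sum_congr rfl fun t ht => ?_
  have hs : (s ! : K) ≠ 0 := Nat.cast_ne_zero.2 s.factorial_ne_zero
  rw [Nat.cast_choose K (Nat.lt_succ_iff.mp (mem_range.mp ht))]
  field_simp

theorem truncExp_add [CharZero K] (n : ℕ) (x y : K) :
    truncExp n (x + y) = ∑ i ∈ range (n + 1), x ^ i / i ! * truncExp (n - i) y := by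
  simp only [truncExp, add_pow_div_factorial, mul_sum]
  rw [sum_range_diag_flip (n + 1) fun i j => x ^ i / i ! * (y ^ j / j !)]
  refine sum_congr rfl fun i hi => ?_
  rw [Nat.sub_add_comm (Nat.lt_succ_iff.mp (mem_range.mp hi))]

theorem sum_mul_truncExp_sub_one [CharZero K] (n : ℕ) (x y : K) :
    ∑ i ∈ range (n + 1), x ^ i / i ! * (truncExp (n - i) y - 1)
      = truncExp n (x + y) - truncExp n x := by
  simp only [mul_sub, mul_one, sum_sub_distrib, truncExp_add]
  rfl

theorem truncExp_succ_sub_one (n : ℕ) (y : K) :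
    truncExp (n + 1) y - 1 = ∑ r ∈ range (n + 1), y ^ (n - r + 1) / (n - r + 1)! := by
  rw [truncExp, sum_range_succ', ← sum_range_reflect]
  simp only [pow_zero, Nat.factorial_zero, Nat.cast_one, div_one, add_sub_cancel_right]
  refine sum_congr rfl fun r _ => ?_
  rw [Nat.add_sub_cancel]

theorem truncExp_sub_truncExp_neg (n : ℕ) (x : K) :
    truncExp (n + 1) x - truncExp (n + 1) (-x)
      = ∑ r ∈ range (n + 1), (x ^ (r + 1) - (-x) ^ (r + 1)) / (r + 1)! := by
  rw [truncExp, truncExp, ← sum_sub_distrib, sum_range_succ']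
  simp only [pow_zero, sub_self, add_zero, sub_div]

theorem two_pow_mul_half_pow [CharZero K] {j k : ℕ} (hjk : j ≤ k) (x : K) :
    2 ^ k * (x / 2) ^ j = 2 ^ (k - j) * x ^ j := by
  obtain ⟨i, rfl⟩ := Nat.exists_eq_add_of_le hjk
  rw [Nat.add_sub_cancel_left, pow_add, div_pow]
  field_simp

theorem sum_sum_eq_two_pow_mul_truncExp [CharZero K] (k : ℕ) (L A : K) :
    ∑ ℓ ∈ range (k + 1), ∑ r ∈ range (ℓ + 1),
      2 ^ ℓ * (-1 : K) ^ (k - ℓ) * L ^ (k - ℓ) / ((k - ℓ)! * (ℓ - r + 1)!) * A ^ (ℓ - r + 1)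
      = 2 ^ k * (truncExp (k + 1) (-L / 2 + A) - truncExp (k + 1) (-L / 2)) := by
  calc
    _ = ∑ ℓ ∈ range (k + 1),
          2 ^ k * ((-L / 2) ^ (k - ℓ) / (k - ℓ)!) * (truncExp (ℓ + 1) A - 1) := by
      refine sum_congr rfl fun ℓ hℓ => ?_
      rw [truncExp_succ_sub_one, mul_sum]
      refine sum_congr rfl fun r _ => ?_
      have hcoef : 2 ^ k * (-L / 2) ^ (k - ℓ) = 2 ^ ℓ * (-1) ^ (k - ℓ) * L ^ (k - ℓ) := by
        rw [two_pow_mul_half_pow (Nat.sub_le k ℓ), neg_pow,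
          Nat.sub_sub_self (Nat.lt_succ_iff.mp (mem_range.mp hℓ)), mul_assoc]
      linear_combination (-A ^ (ℓ - r + 1) / ((k - ℓ)! * (ℓ - r + 1)!)) * hcoef
    _ = 2 ^ k * ∑ i ∈ range (k + 1), (-L / 2) ^ i / i ! * (truncExp (k + 1 - i) A - 1) := by
      rw [mul_sum, ← sum_range_reflect]
      refine sum_congr rfl fun i hi => ?_
      have hik : i ≤ k := Nat.lt_succ_iff.mp (mem_range.mp hi)
      rw [Nat.add_sub_cancel, Nat.sub_sub_self hik, Nat.sub_add_comm hik, mul_assoc]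
    _ = _ := by
      rw [← sum_mul_truncExp_sub_one, sum_range_succ _ (k + 1), Nat.sub_self]
      simp [truncExp]

end TruncExp

theorem f11_eq_two_pow_mul_truncExp (m n : ℝ) (k : ℕ) (N : ℝ) :
    f11 m n k N = 2 ^ k * (truncExp (k + 1) (-Real.log (m / n) / 2 + Real.log (m * N))
      - truncExp (k + 1) (-Real.log (m / n) / 2)) :=
  sum_sum_eq_two_pow_mul_truncExp k _ _

theorem f11_difference_general (m n : ℝ) (hm : 0 < m) (hn : 0 < n) (k : ℕ)
    (N : ℝ) (hN : 0 < N) :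
    f11 m n k N - f11 n m k N
      = - ∑ r ∈ Finset.range (k + 1), ((2 : ℝ) ^ (k - r) / 2) / (Nat.factorial (r + 1) : ℝ)
          * ((Real.log (n / m)) ^ (r + 1) - (Real.log (m / n)) ^ (r + 1)) := by
  have hlog_div : Real.log (n / m) = -Real.log (m / n) := by rw [← Real.log_inv, inv_div]
  have hsymm : -Real.log (n / m) / 2 + Real.log (n * N)
      = -Real.log (m / n) / 2 + Real.log (m * N) := by
    rw [hlog_div, Real.log_mul hn.ne' hN.ne', Real.log_mul hm.ne' hN.ne',
      Real.log_div hm.ne' hn.ne']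
    ring
  set L := Real.log (m / n)
  calc
    _ = 2 ^ k * (truncExp (k + 1) (L / 2) - truncExp (k + 1) (-(L / 2))) := by
      rw [f11_eq_two_pow_mul_truncExp, f11_eq_two_pow_mul_truncExp, hsymm, hlog_div, neg_neg,
        neg_div]
      ring
    _ = _ := by
      rw [truncExp_sub_truncExp_neg, mul_sum, ← sum_neg_distrib, hlog_div]
      refine sum_congr rfl fun r hr => ?_
      have hrk : r + 1 ≤ k + 1 := mem_range.mp hr
      have h := two_pow_mul_half_pow hrk L
      have h' := two_pow_mul_half_pow hrk (-L)
      rw [Nat.add_sub_add_right] at h h'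
      rw [neg_div] at h'
      linear_combination (h - h') / (2 * (r + 1)!)

theorem f11_difference (m n : ℝ) (hm : 0 < m) (hn : 0 < n) (hmn : m ≠ n) (k : ℕ)
    (N : ℝ) (hN : 0 < N) :
    f11 m n k N - f11 n m k N
      = - ∑ r ∈ Finset.range (k + 1), ((2 : ℝ) ^ (k - r) / 2) / (Nat.factorial (r + 1) : ℝ)
          * ((Real.log (n / m)) ^ (r + 1) - (Real.log (m / n)) ^ (r + 1)) :=
  f11_difference_general m n hm hn k N hN
end
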